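/- Let n ≥ 1. For every smooth function f : ℝ^n × ℝ^n × ℝ^n → ℂ one has the commutator identity D_s(D_t f) − D_t(D_s f) = −i Δ f, where Δ f = Σ_{j=1}^n ( ∂²f/∂x_j² + ∂²f/∂y_j² ) is the Laplacian on ℝ^{2n}. -/

import Mathlib

open Complex Finset Matrix

noncomputable section

/-- A point of `ℝ^n × ℝ^n × ℝ^n`, with coordinates `(x, y, q)`. -/
abbrev Vec (n : ℕ) := (Fin n → ℝ) × (Fin n → ℝ) × (Fin n → ℝ)

/-- Partial derivative in the variable `x_j`. -/
noncomputable def pdx (n : ℕ) (j : Fin n) (f : Vec n → ℂ) : Vec n → ℂ :=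
  fun p => deriv (fun t => f (Function.update p.1 j t, p.2.1, p.2.2)) (p.1 j)

/-- Partial derivative in the variable `y_j`. -/
noncomputable def pdy (n : ℕ) (j : Fin n) (f : Vec n → ℂ) : Vec n → ℂ :=
  fun p => deriv (fun t => f (p.1, Function.update p.2.1 j t, p.2.2)) (p.2.1 j)

/-- Partial derivative in the variable `q_j`. -/
noncomputable def pdq (n : ℕ) (j : Fin n) (f : Vec n → ℂ) : Vec n → ℂ :=
  fun p => deriv (fun t => f (p.1, p.2.1, Function.update p.2.2 j t)) (p.2.2 j)

/-- The symplectic Dirac operator `D_s f = Σ_j (i q_j ∂f/∂y_j − ∂²f/∂q_j∂x_j)`. -/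
noncomputable def Ds (n : ℕ) (f : Vec n → ℂ) : Vec n → ℂ :=
  fun p => ∑ j : Fin n, (Complex.I * (p.2.2 j : ℂ) * pdy n j f p - pdq n j (pdx n j f) p)

/-- The twisted symplectic Dirac operator `D_t f = Σ_j (i q_j ∂f/∂x_j + ∂²f/∂y_j∂q_j)`. -/
noncomputable def Dt (n : ℕ) (f : Vec n → ℂ) : Vec n → ℂ :=
  fun p => ∑ j : Fin n, (Complex.I * (p.2.2 j : ℂ) * pdx n j f p + pdy n j (pdq n j f) p)

/-- The Fischer dual `X_s f = Σ_j (y_j ∂f/∂q_j + i q_j x_j f)`. -/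
noncomputable def Xs (n : ℕ) (f : Vec n → ℂ) : Vec n → ℂ :=
  fun p => ∑ j : Fin n, ((p.2.1 j : ℂ) * pdq n j f p + Complex.I * (p.2.2 j : ℂ) * (p.1 j : ℂ) * f p)

/-- The Fischer dual `X_t f = Σ_j (x_j ∂f/∂q_j − i y_j q_j f)`. -/
noncomputable def Xt (n : ℕ) (f : Vec n → ℂ) : Vec n → ℂ :=
  fun p => ∑ j : Fin n, ((p.1 j : ℂ) * pdq n j f p - Complex.I * (p.2.1 j : ℂ) * (p.2.2 j : ℂ) * f p)

/-- The Euler operator `𝔼 f = Σ_j (x_j ∂f/∂x_j + y_j ∂f/∂y_j)`. -/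
noncomputable def EulerOp (n : ℕ) (f : Vec n → ℂ) : Vec n → ℂ :=
  fun p => ∑ j : Fin n, ((p.1 j : ℂ) * pdx n j f p + (p.2.1 j : ℂ) * pdy n j f p)

/-- The Laplacian in the `(x,y)` variables. -/
noncomputable def Lap (n : ℕ) (f : Vec n → ℂ) : Vec n → ℂ :=
  fun p => ∑ j : Fin n, (pdx n j (pdx n j f) p + pdy n j (pdy n j f) p)

/-!
On smooth functions the partial derivatives `X_j = ∂/∂x_j`, `Y_j = ∂/∂y_j`, `Q_j = ∂/∂q_j`
commute with each other (symmetry of second derivatives), and multiplication `M_k` by `i q_k`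
commutes with everything except `Q_k`, where the Leibniz rule gives `[Q_k, M_k] = i`.
In the ring of ℂ-linear endomorphisms of the algebra of smooth functions,
`D_s = Σ_j (M_j Y_j - Q_j X_j)` and `D_t = Σ_k (M_k X_k + Y_k Q_k)`, so summands with `j ≠ k`
commute and the commutator reduces to `Σ_j [M_j Y_j - Q_j X_j, M_j X_j + Y_j Q_j]`.
Only `[Q_j, M_j] = i` contributes to each of these, giving `-i (X_j² + Y_j²)`.
-/

section SmoothFunctions

variable (E : Type*) [NormedAddCommGroup E] [NormedSpace ℝ E]

open scoped ContDiff

def smoothFunctions : Subalgebra ℂ (E → ℂ) where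
  carrier := {f | ContDiff ℝ ∞ f}
  mul_mem' {_ _} (hf : ContDiff ℝ ∞ _) hg := hf.mul hg
  add_mem' {_ _} (hf : ContDiff ℝ ∞ _) hg := hf.add hg
  algebraMap_mem' c := (contDiff_const : ContDiff ℝ ∞ fun _ : E => c)

variable {E}

lemma mem_smoothFunctions {f : E → ℂ} : f ∈ smoothFunctions E ↔ ContDiff ℝ ∞ f := Iff.rfl

lemma contDiff_smoothFunctions (f : smoothFunctions E) : ContDiff ℝ ∞ (f : E → ℂ) := f.2

lemma differentiable_smoothFunctions (f : smoothFunctions E) : Differentiable ℝ (f : E → ℂ) :=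
  (contDiff_smoothFunctions f).differentiable (by simp)

lemma contDiff_fderiv_smoothFunctions (f : smoothFunctions E) :
    ContDiff ℝ ∞ (fderiv ℝ (f : E → ℂ)) :=
  (contDiff_smoothFunctions f).fderiv_right (m := ∞) (by simp)

def dirDeriv (v : E) : Module.End ℂ (smoothFunctions E) where
  toFun f := ⟨fun p => fderiv ℝ f p v,
    mem_smoothFunctions.2 ((contDiff_fderiv_smoothFunctions f).clm_apply contDiff_const)⟩
  map_add' f g := by
    ext p
    simp [fderiv_add (differentiable_smoothFunctions f p) (differentiable_smoothFunctions g p)]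
  map_smul' c f := by
    ext p
    simp [fderiv_const_smul (differentiable_smoothFunctions f p)]

@[simp]
lemma dirDeriv_apply (v : E) (f : smoothFunctions E) (p : E) :
    (dirDeriv v f : E → ℂ) p = fderiv ℝ f p v := rfl

lemma dirDeriv_dirDeriv_apply (v w : E) (f : smoothFunctions E) (p : E) :
    (dirDeriv v (dirDeriv w f) : E → ℂ) p = fderiv ℝ (fderiv ℝ f) p v w := by
  show fderiv ℝ (fun q => fderiv ℝ (f : E → ℂ) q w) p v = _
  rw [fderiv_clm_apply ((contDiff_fderiv_smoothFunctions f).differentiable (by simp) p)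
    (differentiableAt_const w)]
  simp

lemma commute_dirDeriv (v w : E) : Commute (dirDeriv v) (dirDeriv w) := by
  ext f p
  simp only [Module.End.mul_apply, dirDeriv_dirDeriv_apply]
  exact (contDiff_smoothFunctions f).contDiffAt.isSymmSndFDerivAt
    (by simpa using ENat.LEInfty.out) v w

def coordMul (ℓ : E →L[ℝ] ℝ) : Module.End ℂ (smoothFunctions E) :=
  LinearMap.mulLeft ℂ ⟨ofRealCLM ∘L ℓ, mem_smoothFunctions.2 (ofRealCLM ∘L ℓ).contDiff⟩

@[simp]
lemma coordMul_apply (ℓ : E →L[ℝ] ℝ) (f : smoothFunctions E) (p : E) :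
    (coordMul ℓ f : E → ℂ) p = ℓ p * (f : E → ℂ) p := rfl

lemma commute_coordMul (ℓ ℓ' : E →L[ℝ] ℝ) : Commute (coordMul ℓ) (coordMul ℓ') := by
  ext f p
  simp only [Module.End.mul_apply, coordMul_apply]
  ring

lemma dirDeriv_mul_coordMul_sub (v : E) (ℓ : E →L[ℝ] ℝ) :
    dirDeriv v * coordMul ℓ - coordMul ℓ * dirDeriv v = (ℓ v : ℂ) • 1 := by
  ext f p
  show fderiv ℝ (fun q => (ofRealCLM ∘L ℓ) q * (f : E → ℂ) q) p v - ℓ p * fderiv ℝ f p v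
    = (ℓ v : ℂ) * (f : E → ℂ) p
  rw [fderiv_fun_mul (ofRealCLM ∘L ℓ).differentiableAt (differentiable_smoothFunctions f p)]
  simp [mul_comm]

end SmoothFunctions

lemma deriv_comp_add_sub_smul {E F : Type*} [NormedAddCommGroup E] [NormedSpace ℝ E]
    [NormedAddCommGroup F] [NormedSpace ℝ F] {f : E → F} {p : E} (hf : DifferentiableAt ℝ f p)
    (v : E) (a : ℝ) : deriv (fun t : ℝ => f (p + (t - a) • v)) a = fderiv ℝ f p v := by
  have hline : HasDerivAt (fun t : ℝ => p + (t - a) • v) v a := by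
    simpa using (((hasDerivAt_id a).sub_const a).smul_const v).const_add p
  exact (hf.hasFDerivAt.comp_hasDerivAt_of_eq a hline (by simp)).deriv

lemma Function.update_eq_add_sub_smul_single {ι : Type*} [DecidableEq ι] (x : ι → ℝ) (j : ι)
    (t : ℝ) : Function.update x j t = x + (t - x j) • Pi.single j 1 := by
  ext k
  by_cases hk : k = j
  · subst hk; simp
  · simp [hk]

theorem dirac_pair_commutator {A : Type*} [Ring A] {M X Y Q c : A}
    (hMX : Commute M X) (hMY : Commute M Y) (hXY : Commute X Y) (hXQ : Commute X Q)
    (hYQ : Commute Y Q) (hQM : Q * M - M * Q = c) (hcY : Commute c Y) :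
    (M * Y - Q * X) * (M * X + Y * Q) - (M * X + Y * Q) * (M * Y - Q * X) =
      -c * (X * X + Y * Y) := by
  have hMY_MX : Commute (M * Y) (M * X) :=
    ((Commute.refl M).mul_right hMX).mul_left (hMY.symm.mul_right hXY.symm)
  have hQX_YQ : Commute (Q * X) (Y * Q) :=
    (hYQ.symm.mul_right (Commute.refl Q)).mul_left (hXY.mul_right hXQ)
  have hMY_YQ : M * Y * (Y * Q) - Y * Q * (M * Y) = -c * (Y * Y) := by
    have hQM' : Q * M = M * Q + c := by rw [← hQM]; abel
    calc M * Y * (Y * Q) - Y * Q * (M * Y) = M * Y * (Y * Q) - Y * (Q * M) * Y := by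
          noncomm_ring
      _ = M * Y * (Y * Q) - ((Y * M) * (Q * Y) + (Y * c) * Y) := by rw [hQM']; noncomm_ring
      _ = -c * (Y * Y) := by rw [← hMY.eq, ← hYQ.eq, ← hcY.eq]; noncomm_ring
  have hQX_MX : Q * X * (M * X) - M * X * (Q * X) = c * (X * X) := by
    calc Q * X * (M * X) - M * X * (Q * X) = Q * (X * M) * X - M * (X * Q) * X := by
          noncomm_ring
      _ = (Q * M - M * Q) * (X * X) := by rw [← hMX.eq, hXQ.eq]; noncomm_ring
      _ = c * (X * X) := by rw [hQM]
  calc (M * Y - Q * X) * (M * X + Y * Q) - (M * X + Y * Q) * (M * Y - Q * X)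
      = (M * Y * (M * X) - M * X * (M * Y)) + (M * Y * (Y * Q) - Y * Q * (M * Y))
        - (Q * X * (M * X) - M * X * (Q * X)) - (Q * X * (Y * Q) - Y * Q * (Q * X)) := by
        noncomm_ring
    _ = -c * (X * X + Y * Y) := by
        rw [hMY_MX.eq, hQX_YQ.eq, hMY_YQ, hQX_MX]; noncomm_ring

theorem Finset.sum_mul_sum_sub_sum_mul_sum_of_commute {ι A : Type*} [Fintype ι] [Ring A]
    (D T : ι → A) (h : ∀ j k, j ≠ k → Commute (D j) (T k)) :
    (∑ j, D j) * (∑ k, T k) - (∑ k, T k) * (∑ j, D j) = ∑ j, (D j * T j - T j * D j) := by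
  rw [Finset.sum_mul_sum, Finset.sum_mul_sum, Finset.sum_comm (f := fun k j => T k * D j),
    ← Finset.sum_sub_distrib]
  refine Finset.sum_congr rfl fun j _ => ?_
  rw [← Finset.sum_sub_distrib]
  exact Finset.sum_eq_single j (fun k _ hkj => sub_eq_zero.2 (h j k hkj.symm).eq) (by simp)

namespace SymplecticDirac

variable {n : ℕ}

def xDir (j : Fin n) : Vec n := (Pi.single j 1, 0, 0)

def yDir (j : Fin n) : Vec n := (0, Pi.single j 1, 0)

def qDir (j : Fin n) : Vec n := (0, 0, Pi.single j 1)

def qCoord (j : Fin n) : Vec n →L[ℝ] ℝ :=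
  ContinuousLinearMap.proj j ∘L ContinuousLinearMap.snd ℝ _ _ ∘L ContinuousLinearMap.snd ℝ _ _

def qMul (j : Fin n) : Module.End ℂ (smoothFunctions (Vec n)) := I • coordMul (qCoord j)

@[simp]
lemma qMul_apply (j : Fin n) (f : smoothFunctions (Vec n)) (p : Vec n) :
    (qMul j f : Vec n → ℂ) p = I * p.2.2 j * (f : Vec n → ℂ) p := by
  simp [qMul, qCoord, mul_assoc]

lemma dirDeriv_mul_qMul_sub (v : Vec n) (k : Fin n) :
    dirDeriv v * qMul k - qMul k * dirDeriv v = (I * v.2.2 k) • 1 := by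
  calc dirDeriv v * qMul k - qMul k * dirDeriv v
      = I • (dirDeriv v * coordMul (qCoord k) - coordMul (qCoord k) * dirDeriv v) := by
        simp only [qMul, mul_smul_comm, smul_mul_assoc]
        exact (smul_sub I (dirDeriv v * coordMul (qCoord k))
          (coordMul (qCoord k) * dirDeriv v)).symm
    _ = (I * v.2.2 k) • 1 := by rw [dirDeriv_mul_coordMul_sub, smul_smul]; rfl

lemma commute_dirDeriv_qMul {v : Vec n} {k : Fin n} (hv : v.2.2 k = 0) :
    Commute (dirDeriv v) (qMul k) :=
  sub_eq_zero.1 (by simp [dirDeriv_mul_qMul_sub, hv])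

lemma commute_qMul_dirDeriv {v : Vec n} {k : Fin n} (hv : v.2.2 k = 0) :
    Commute (qMul k) (dirDeriv v) :=
  (commute_dirDeriv_qMul hv).symm

lemma commute_qMul (j k : Fin n) : Commute (qMul j) (qMul k) :=
  ((commute_coordMul (qCoord j) (qCoord k)).smul_left I).smul_right I

def DsOp : Module.End ℂ (smoothFunctions (Vec n)) :=
  ∑ j, (qMul j * dirDeriv (yDir j) - dirDeriv (qDir j) * dirDeriv (xDir j))

def DtOp : Module.End ℂ (smoothFunctions (Vec n)) :=
  ∑ j, (qMul j * dirDeriv (xDir j) + dirDeriv (yDir j) * dirDeriv (qDir j))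

def LapOp : Module.End ℂ (smoothFunctions (Vec n)) :=
  ∑ j, (dirDeriv (xDir j) * dirDeriv (xDir j) + dirDeriv (yDir j) * dirDeriv (yDir j))

lemma commute_summands_of_ne {j k : Fin n} (hjk : j ≠ k) :
    Commute (qMul j * dirDeriv (yDir j) - dirDeriv (qDir j) * dirDeriv (xDir j))
      (qMul k * dirDeriv (xDir k) + dirDeriv (yDir k) * dirDeriv (qDir k)) := by
  apply Commute.sub_left (R := Module.End ℂ (smoothFunctions (Vec n))) <;>
    apply Commute.mul_left <;>
    apply Commute.add_right (R := Module.End ℂ (smoothFunctions (Vec n))) <;>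
    apply Commute.mul_right <;>
    -- reducible unification keeps `dirDeriv` and `qMul` from being unfolded against each other
    first
      | with_reducible apply commute_dirDeriv
      | with_reducible apply commute_qMul
      | with_reducible apply commute_dirDeriv_qMul
      | with_reducible apply commute_qMul_dirDeriv
  all_goals simp [xDir, yDir, qDir, hjk, hjk.symm]

lemma DsOp_mul_DtOp_sub : DsOp * DtOp - DtOp * DsOp = (-I) • LapOp (n := n) := by
  refine (Finset.sum_mul_sum_sub_sum_mul_sum_of_commute
    (A := Module.End ℂ (smoothFunctions (Vec n))) _ _ (fun _ _ => commute_summands_of_ne)).trans ?_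
  rw [LapOp, Finset.smul_sum]
  refine Finset.sum_congr rfl fun j _ => ?_
  have hQM : dirDeriv (qDir j) * qMul j - qMul j * dirDeriv (qDir j) = I • 1 := by
    simp [dirDeriv_mul_qMul_sub, qDir]
  have hMX : Commute (qMul j) (dirDeriv (xDir j)) := commute_qMul_dirDeriv (by simp [xDir])
  have hMY : Commute (qMul j) (dirDeriv (yDir j)) := commute_qMul_dirDeriv (by simp [yDir])
  have hIY : Commute (I • 1 : Module.End ℂ (smoothFunctions (Vec n))) (dirDeriv (yDir j)) :=
    (Commute.one_left _).smul_left I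
  refine (dirac_pair_commutator (A := Module.End ℂ (smoothFunctions (Vec n))) hMX hMY
    (commute_dirDeriv (xDir j) (yDir j)) (commute_dirDeriv (xDir j) (qDir j))
    (commute_dirDeriv (yDir j) (qDir j)) hQM hIY).trans ?_
  ext f p
  simp only [Module.End.mul_apply, LinearMap.add_apply, LinearMap.neg_apply, LinearMap.smul_apply,
    Module.End.one_apply, AddMemClass.coe_add, NegMemClass.coe_neg, SetLike.val_smul, Pi.add_apply,
    Pi.neg_apply, Pi.smul_apply, smul_eq_mul]
  ring

lemma pdx_eq_dirDeriv (j : Fin n) (g : smoothFunctions (Vec n)) :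
    pdx n j g = dirDeriv (xDir j) g := by
  ext p
  have hline : ∀ t, ((Function.update p.1 j t, p.2.1, p.2.2) : Vec n) =
      p + (t - p.1 j) • xDir j :=
    fun t => by rw [Function.update_eq_add_sub_smul_single]; ext <;> simp [xDir]
  simp only [pdx, hline]
  exact deriv_comp_add_sub_smul (differentiable_smoothFunctions g p) _ _

lemma pdy_eq_dirDeriv (j : Fin n) (g : smoothFunctions (Vec n)) :
    pdy n j g = dirDeriv (yDir j) g := by
  ext p
  have hline : ∀ t, ((p.1, Function.update p.2.1 j t, p.2.2) : Vec n) =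
      p + (t - p.2.1 j) • yDir j :=
    fun t => by rw [Function.update_eq_add_sub_smul_single]; ext <;> simp [yDir]
  simp only [pdy, hline]
  exact deriv_comp_add_sub_smul (differentiable_smoothFunctions g p) _ _

lemma pdq_eq_dirDeriv (j : Fin n) (g : smoothFunctions (Vec n)) :
    pdq n j g = dirDeriv (qDir j) g := by
  ext p
  have hline : ∀ t, ((p.1, p.2.1, Function.update p.2.2 j t) : Vec n) =
      p + (t - p.2.2 j) • qDir j :=
    fun t => by rw [Function.update_eq_add_sub_smul_single]; ext <;> simp [qDir]
  simp only [pdq, hline]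
  exact deriv_comp_add_sub_smul (differentiable_smoothFunctions g p) _ _

lemma Ds_eq_DsOp (g : smoothFunctions (Vec n)) : Ds n g = DsOp g := by
  ext p
  simp [Ds, DsOp, pdx_eq_dirDeriv, pdy_eq_dirDeriv, pdq_eq_dirDeriv]

lemma Dt_eq_DtOp (g : smoothFunctions (Vec n)) : Dt n g = DtOp g := by
  ext p
  simp [Dt, DtOp, pdx_eq_dirDeriv, pdy_eq_dirDeriv, pdq_eq_dirDeriv]

lemma Lap_eq_LapOp (g : smoothFunctions (Vec n)) : Lap n g = LapOp g := by
  ext p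
  simp [Lap, LapOp, pdx_eq_dirDeriv, pdy_eq_dirDeriv]

end SymplecticDirac

open SymplecticDirac in
theorem commutator_Ds_Dt_eq_neg_i_Laplacian_general
    (n : ℕ) (f : Vec n → ℂ) (hf : ContDiff ℝ (⊤ : ℕ∞) f) :
    (fun p => Ds n (Dt n f) p - Dt n (Ds n f) p) = (fun p => -Complex.I * Lap n f p) := by
  let F : smoothFunctions (Vec n) := ⟨f, hf⟩
  change (fun p => Ds n (Dt n F) p - Dt n (Ds n F) p) = (fun p => -I * Lap n F p)
  rw [Dt_eq_DtOp, Ds_eq_DsOp, Ds_eq_DsOp, Dt_eq_DtOp, Lap_eq_LapOp]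
  funext p
  simpa using congrArg (fun A => (A F : Vec n → ℂ) p) DsOp_mul_DtOp_sub

theorem commutator_Ds_Dt_eq_neg_i_Laplacian
    (n : ℕ) (hn : 1 ≤ n) (f : Vec n → ℂ) (hf : ContDiff ℝ (⊤ : ℕ∞) f) :
    (fun p => Ds n (Dt n f) p - Dt n (Ds n f) p) = (fun p => -Complex.I * Lap n f p) :=
  commutator_Ds_Dt_eq_neg_i_Laplacian_general n f hf
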